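/- Linear postponement of variable-exponential steps in the value substitution calculus: (1) if t →evar s →m u then t →m →evar u; (2) if t →evar →eλ u then t →eλ →e u (where →e = →eλ ∪ →evar). -/

import Mathlib

/-- Terms of the value substitution calculus, in de Bruijn notation:
variables, abstractions, applications and explicit substitutions
(`sub t u` is `t[x←u]`, binding de Bruijn index 0 of `t`). -/
inductive VTm : Type
  | var : Nat → VTm
  | lam : VTm → VTm
  | app : VTm → VTm → VTm
  | sub : VTm → VTm → VTm

namespace VTm

/-- Shift (by one) the free de Bruijn indices `≥ k`. -/
def shift (k : Nat) : VTm → VTm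
  | var n => if k ≤ n then var (n+1) else var n
  | lam t => lam (shift (k+1) t)
  | app t u => app (shift k t) (shift k u)
  | sub t u => sub (shift (k+1) t) (shift k u)

/-- Capture-avoiding (meta-level) substitution of `u` for variable `k`. -/
def subst : VTm → Nat → VTm → VTm
  | var n, k, u => if n = k then u else if k < n then var (n-1) else var n
  | lam t, k, u => lam (subst t (k+1) (shift 0 u))
  | app t s, k, u => app (subst t k u) (subst s k u)
  | sub t s, k, u => sub (subst t (k+1) (shift 0 u)) (subst s k u)

/-- vsub-values: variables and abstractions. -/
inductive IsVal : VTm → Prop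
  | var : IsVal (var n)
  | lam : IsVal (lam t)

/-- Multiplicative root rule `L⟨λx.t⟩u ↦m L⟨t[x←u]⟩` (the recursion on the
substitution context `L` performs the de Bruijn shifts corresponding to the
side condition that the variables bound by `L` do not occur free in `u`). -/
inductive RootM : VTm → VTm → Prop
  | beta : RootM (app (lam t) u) (sub t u)
  | under : RootM (app t (shift 0 u)) s → RootM (app (sub t r) u) (sub s r)

/-- Exponential root rule `t[x←L⟨v⟩] ↦e L⟨t{x:=v}⟩` for an abstraction `v`. -/
inductive RootEAbs : VTm → VTm → Prop
  | beta : RootEAbs (sub t (lam u)) (subst t 0 (lam u))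
  | under : RootEAbs (sub (shift 1 t) b) s → RootEAbs (sub t (sub b r)) (sub s r)

/-- Exponential root rule `t[x←L⟨v⟩] ↦e L⟨t{x:=v}⟩` for a variable `v`. -/
inductive RootEVar : VTm → VTm → Prop
  | beta : RootEVar (sub t (var n)) (subst t 0 (var n))
  | under : RootEVar (sub (shift 1 t) b) s → RootEVar (sub t (sub b r)) (sub s r)

/-- Closure of a root rule under the weak evaluation contexts
`E ::= ⟨·⟩ | t E | E t | E[x←u] | t[x←E]`. -/
inductive Clo (R : VTm → VTm → Prop) : VTm → VTm → Prop
  | root : R t u → Clo R t u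
  | appL : Clo R t t' → Clo R (app t u) (app t' u)
  | appR : Clo R u u' → Clo R (app t u) (app t u')
  | subL : Clo R t t' → Clo R (sub t u) (sub t' u)
  | subR : Clo R u u' → Clo R (sub t u) (sub t u')

/-- Multiplicative reduction `→m`. -/
def StepM : VTm → VTm → Prop := Clo RootM
/-- Abstraction-exponential reduction `→eλ`. -/
def StepEAbs : VTm → VTm → Prop := Clo RootEAbs
/-- Variable-exponential reduction `→evar`. -/
def StepEVar : VTm → VTm → Prop := Clo RootEVar
/-- Exponential reduction `→e = →eλ ∪ →evar`. -/
def StepE (t u : VTm) : Prop := StepEAbs t u ∨ StepEVar t u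
/-- vsub-reduction `→vsub = →m ∪ →e`. -/
def StepVsub (t u : VTm) : Prop := StepM t u ∨ StepE t u

/-- Swap the de Bruijn indices `k` and `k+1`. -/
def swap (k : Nat) : VTm → VTm
  | var n => if n = k then var (k+1) else if n = k+1 then var k else var n
  | lam t => lam (swap (k+1) t)
  | app t u => app (swap k t) (swap k u)
  | sub t u => sub (swap (k+1) t) (swap k u)

/-- Structural equivalence `≡`: least equivalence relation closed under
evaluation contexts generated by the four permutation axioms for explicit
substitutions (the de Bruijn shifts/swaps implement the freshness side
conditions). -/
inductive SEq : VTm → VTm → Prop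
  | com : SEq (sub (sub t (shift 0 s)) u) (sub (sub (swap 0 t) (shift 0 u)) s)
  | apR : SEq (app t (sub s u)) (sub (app (shift 0 t) s) u)
  | apL : SEq (app (sub t u) s) (sub (app t (shift 0 s)) u)
  | es  : SEq (sub t (sub u s)) (sub (sub (shift 1 t) u) s)
  | refl : SEq t t
  | symm : SEq t u → SEq u t
  | trans : SEq t u → SEq u s → SEq t s
  | appL : SEq t t' → SEq (app t u) (app t' u)
  | appR : SEq u u' → SEq (app t u) (app t u')
  | subL : SEq t t' → SEq (sub t u) (sub t' u)
  | subR : SEq u u' → SEq (sub t u) (sub t u')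

/-- Terms without explicit substitutions. -/
def NoES : VTm → Prop
  | var _ => True
  | lam t => NoES t
  | app t u => NoES t ∧ NoES u
  | sub _ _ => False

end VTm
open VTm

/-!
Both parts are proved by induction on the `evar` step, by cases on where the next step fires;
steps at disjoint positions commute. If the next step acts inside `t{x:=y}`, the result of
`t[x←y] ↦evar t{x:=y}`, it can be pulled back into `t`: substituting a variable for a variable is
a renaming, and renamings reflect the root rules. The remaining critical pairs come from rules
acting at a distance: the `evar` redex may sit in the substitution context `L` of the next
redex, and is then fired after it. In (2) an `eλ` step may also substitute an abstraction for the
variable `y` of a pending `evar` redex `u[z←y]`, which turns it into an `eλ` redex; this is why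
(2) ends with a `→e` step rather than an `→evar` step.
-/

namespace VTm

def upRen (ρ : ℕ → ℕ) : ℕ → ℕ
  | 0 => 0
  | n + 1 => ρ n + 1

def rename (ρ : ℕ → ℕ) : VTm → VTm
  | var n => var (ρ n)
  | lam t => lam (rename (upRen ρ) t)
  | app t u => app (rename ρ t) (rename ρ u)
  | sub t u => sub (rename (upRen ρ) t) (rename ρ u)

def upSubst (σ : ℕ → VTm) : ℕ → VTm
  | 0 => var 0
  | n + 1 => rename Nat.succ (σ n)

def psubst (σ : ℕ → VTm) : VTm → VTm
  | var n => σ n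
  | lam t => lam (psubst (upSubst σ) t)
  | app t u => app (psubst σ t) (psubst σ u)
  | sub t u => sub (psubst (upSubst σ) t) (psubst σ u)

theorem rename_congr {ρ τ : ℕ → ℕ} (h : ∀ n, ρ n = τ n) (t : VTm) : rename ρ t = rename τ t :=
  congrArg (rename · t) (funext h)

theorem psubst_congr {σ τ : ℕ → VTm} (h : ∀ n, σ n = τ n) (t : VTm) : psubst σ t = psubst τ t :=
  congrArg (psubst · t) (funext h)

theorem upRen_comp (ρ τ : ℕ → ℕ) : upRen ρ ∘ upRen τ = upRen (ρ ∘ τ) := by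
  funext n; cases n <;> rfl

theorem rename_rename (ρ τ : ℕ → ℕ) (t : VTm) :
    rename ρ (rename τ t) = rename (ρ ∘ τ) t := by
  induction t generalizing ρ τ <;> simp [rename, upRen_comp, *]

theorem upRen_id : upRen id = id := by
  funext n; cases n <;> rfl

theorem rename_id (t : VTm) : rename id t = t := by
  induction t <;> simp [rename, upRen_id, *]

theorem upSubst_comp_upRen (σ : ℕ → VTm) (ρ : ℕ → ℕ) :
    upSubst σ ∘ upRen ρ = upSubst (σ ∘ ρ) := by
  funext n; cases n <;> rfl

theorem psubst_rename (σ : ℕ → VTm) (ρ : ℕ → ℕ) (t : VTm) :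
    psubst σ (rename ρ t) = psubst (σ ∘ ρ) t := by
  induction t generalizing σ ρ <;> simp [rename, psubst, upSubst_comp_upRen, *]

theorem rename_upRen_comp_upSubst (ρ : ℕ → ℕ) (σ : ℕ → VTm) :
    rename (upRen ρ) ∘ upSubst σ = upSubst (rename ρ ∘ σ) := by
  funext n
  cases n with
  | zero => rfl
  | succ n => simp only [Function.comp, upSubst, rename_rename]; rfl

theorem rename_psubst (ρ : ℕ → ℕ) (σ : ℕ → VTm) (t : VTm) :
    rename ρ (psubst σ t) = psubst (rename ρ ∘ σ) t := by
  induction t generalizing ρ σ <;> simp [rename, psubst, rename_upRen_comp_upSubst, *]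

theorem psubst_upSubst_comp_upSubst (σ τ : ℕ → VTm) :
    psubst (upSubst σ) ∘ upSubst τ = upSubst (psubst σ ∘ τ) := by
  funext n
  cases n with
  | zero => rfl
  | succ n => simp only [Function.comp, upSubst, psubst_rename, rename_psubst]; rfl

theorem psubst_psubst (σ τ : ℕ → VTm) (t : VTm) :
    psubst σ (psubst τ t) = psubst (psubst σ ∘ τ) t := by
  induction t generalizing σ τ <;> simp [psubst, psubst_upSubst_comp_upSubst, *]

theorem upSubst_var_comp (ρ : ℕ → ℕ) : upSubst (var ∘ ρ) = var ∘ upRen ρ := by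
  funext n; cases n <;> rfl

theorem psubst_var_comp (ρ : ℕ → ℕ) (t : VTm) : psubst (var ∘ ρ) t = rename ρ t := by
  induction t generalizing ρ <;> simp [psubst, rename, upSubst_var_comp, *]

theorem psubst_var (t : VTm) : psubst var t = t := by
  simpa [rename_id] using psubst_var_comp id t

def shiftRen (k : ℕ) (n : ℕ) : ℕ := if k ≤ n then n + 1 else n

theorem upRen_shiftRen (k : ℕ) : upRen (shiftRen k) = shiftRen (k + 1) := by
  funext n; cases n <;> simp [upRen, shiftRen, apply_ite (· + 1)]

theorem shift_eq_rename (k : ℕ) (t : VTm) : shift k t = rename (shiftRen k) t := by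
  induction t generalizing k with
  | var n => simp only [shift, rename, shiftRen]; split <;> rfl
  | _ => simp [shift, rename, upRen_shiftRen, *]

def substAt (k : ℕ) (v : VTm) (n : ℕ) : VTm :=
  if n = k then v else if k < n then var (n - 1) else var n

theorem upSubst_substAt (k : ℕ) (v : VTm) :
    upSubst (substAt k v) = substAt (k + 1) (shift 0 v) := by
  funext n
  rcases n with _ | n
  · simp [upSubst, substAt]
  · simp only [upSubst, substAt, shift_eq_rename, Nat.add_right_cancel_iff, Nat.add_lt_add_iff_right]
    split_ifs
    · exact rename_congr (fun _ => by simp [shiftRen]) v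
    · simp only [rename]; congr 1; omega
    · rfl

theorem subst_eq_psubst (t : VTm) (k : ℕ) (v : VTm) : subst t k v = psubst (substAt k v) t := by
  induction t generalizing k v with
  | var n => rfl
  | _ => simp [subst, psubst, upSubst_substAt, *]

def substVarRen (k n m : ℕ) : ℕ := if m = k then n else if k < m then m - 1 else m

theorem subst_var_eq_rename (t : VTm) (k n : ℕ) : subst t k (var n) = rename (substVarRen k n) t := by
  rw [subst_eq_psubst, ← psubst_var_comp]
  refine psubst_congr (fun m => ?_) t
  simp only [substAt, substVarRen, Function.comp]
  split_ifs <;> rfl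

theorem subst_shift_zero (t v : VTm) : subst (shift 0 t) 0 v = t := by
  rw [shift_eq_rename, subst_eq_psubst, psubst_rename]
  conv_rhs => rw [← psubst_var t]
  exact psubst_congr (fun m => by simp [substAt, shiftRen]) t

theorem subst_shift_one_one (t v : VTm) : subst (shift 1 t) 1 v = t := by
  rw [shift_eq_rename, subst_eq_psubst, psubst_rename]
  conv_rhs => rw [← psubst_var t]
  refine psubst_congr (fun m => ?_) t
  simp only [Function.comp, substAt, shiftRen]
  split_ifs <;> first | rfl | (congr 1; omega)

theorem subst_subst_zero (t w : VTm) (k : ℕ) (v : VTm) :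
    subst (subst t 0 w) k v = subst (subst t (k + 1) (shift 0 v)) 0 (subst w k v) := by
  simp only [subst_eq_psubst, psubst_psubst]
  refine psubst_congr (fun m => ?_) t
  rcases m with _ | m
  · simp [substAt, psubst]
  · simp only [Function.comp, substAt, Nat.add_right_cancel_iff, Nat.add_lt_add_iff_right]
    split_ifs <;> simp_all [psubst, substAt, ← subst_eq_psubst, subst_shift_zero]
    rw [if_neg (by omega), if_pos (by omega)]

theorem subst_shift_one (t : VTm) (k : ℕ) (v : VTm) :
    subst (shift 1 t) (k + 2) (shift 0 (shift 0 v)) = shift 1 (subst t (k + 1) (shift 0 v)) := by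
  simp only [subst_eq_psubst, shift_eq_rename, psubst_rename, rename_psubst]
  refine psubst_congr (fun m => ?_) t
  rcases m with _ | m
  · simp [substAt, shiftRen, rename]
  · simp only [Function.comp, substAt, shiftRen]
    split_ifs <;> simp_all [rename, shiftRen, rename_rename]
    · exact rename_congr (fun _ => by simp [shiftRen]) v
    all_goals omega

theorem rename_upRen_substVarRen_shift_one (n : ℕ) (t : VTm) :
    (shift 1 t).rename (upRen (substVarRen 0 n)) = t := by
  rw [shift_eq_rename, rename_rename]
  conv_rhs => rw [← rename_id t]
  exact rename_congr (fun m => by rcases m with _ | m <;> simp [upRen, substVarRen, shiftRen]) t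

theorem subst_shift_one_var (t : VTm) (n : ℕ) :
    subst (shift 1 t) 0 (var n) = t.rename (Function.update id 0 n) := by
  rw [shift_eq_rename, subst_var_eq_rename, rename_rename]
  exact rename_congr (fun m => by
    rcases m with _ | m <;> simp [substVarRen, shiftRen, Function.update]) t

theorem rename_upRen_update_shift_one (n : ℕ) (t : VTm) :
    (shift 1 t).rename (upRen (Function.update id 0 n)) = shift 1 t := by
  rw [shift_eq_rename, rename_rename]
  exact rename_congr (fun m => by
    rcases m with _ | m <;> simp [upRen, shiftRen, Function.update]) t

theorem shift_two_shift_one (t : VTm) : shift 2 (shift 1 t) = shift 1 (shift 1 t) := by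
  simp only [shift_eq_rename, rename_rename]
  exact rename_congr (fun m => by simp only [Function.comp, shiftRen]; split_ifs <;> omega) t

theorem shift_one_sub_shift_one (a b : VTm) :
    shift 1 (sub (shift 1 a) b) = sub (shift 1 (shift 1 a)) (shift 1 b) := by
  simp [shift, shift_two_shift_one]

theorem rename_eq_lam {ρ : ℕ → ℕ} {a x : VTm} (h : rename ρ a = lam x) :
    ∃ a₀, a = lam a₀ ∧ rename (upRen ρ) a₀ = x := by
  cases a <;> simp_all [rename]

theorem rename_eq_app {ρ : ℕ → ℕ} {a x y : VTm} (h : rename ρ a = app x y) :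
    ∃ a₁ a₂, a = app a₁ a₂ ∧ rename ρ a₁ = x ∧ rename ρ a₂ = y := by
  cases a <;> simp_all [rename]

theorem rename_eq_sub {ρ : ℕ → ℕ} {a x y : VTm} (h : rename ρ a = sub x y) :
    ∃ a₁ a₂, a = sub a₁ a₂ ∧ rename (upRen ρ) a₁ = x ∧ rename ρ a₂ = y := by
  cases a <;> simp_all [rename]

theorem rename_upRen_shift_zero (ρ : ℕ → ℕ) (u : VTm) :
    rename (upRen ρ) (shift 0 u) = shift 0 (rename ρ u) := by
  simp only [shift_eq_rename, rename_rename]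
  exact rename_congr (fun n => by simp [shiftRen, upRen]) u

theorem rename_upRen_upRen_shift_one (ρ : ℕ → ℕ) (u : VTm) :
    rename (upRen (upRen ρ)) (shift 1 u) = shift 1 (rename (upRen ρ) u) := by
  simp only [shift_eq_rename, rename_rename]
  exact rename_congr (fun n => by rcases n with _ | n <;> simp [shiftRen, upRen]) u

theorem rename_subst_zero (ρ : ℕ → ℕ) (t v : VTm) :
    rename ρ (subst t 0 v) = subst (rename (upRen ρ) t) 0 (rename ρ v) := by
  simp only [subst_eq_psubst, rename_psubst, psubst_rename]
  exact psubst_congr (fun n => by rcases n with _ | n <;> simp [substAt, upRen, rename]) t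

theorem RootEVar.rename {a b : VTm} (h : RootEVar a b) (ρ : ℕ → ℕ) :
    RootEVar (a.rename ρ) (b.rename ρ) := by
  induction h generalizing ρ with
  | beta => rw [rename_subst_zero]; exact .beta
  | under _ ih =>
    refine .under ?_
    simpa only [VTm.rename, rename_upRen_upRen_shift_one] using ih (upRen ρ)

theorem Clo.rename {R : VTm → VTm → Prop}
    (hR : ∀ {a b : VTm}, R a b → ∀ ρ, R (a.rename ρ) (b.rename ρ))
    {a b : VTm} (h : Clo R a b) (ρ : ℕ → ℕ) : Clo R (a.rename ρ) (b.rename ρ) := by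
  induction h generalizing ρ with
  | root h => exact .root (hR h ρ)
  | appL _ ih => exact .appL (ih ρ)
  | appR _ ih => exact .appR (ih ρ)
  | subL _ ih => exact .subL (ih (upRen ρ))
  | subR _ ih => exact .subR (ih ρ)

theorem Clo.shift {R : VTm → VTm → Prop}
    (hR : ∀ {a b : VTm}, R a b → ∀ ρ, R (a.rename ρ) (b.rename ρ))
    {a b : VTm} (h : Clo R a b) (k : ℕ) : Clo R (shift k a) (shift k b) := by
  simpa only [shift_eq_rename] using h.rename hR (shiftRen k)

theorem RootM.of_rename {ρ : ℕ → ℕ} {a b : VTm} (h : RootM (a.rename ρ) b) :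
    ∃ b₀, RootM a b₀ ∧ b = b₀.rename ρ := by
  generalize hx : a.rename ρ = x at h
  induction h generalizing ρ a with
  | beta =>
    obtain ⟨a₁, a₂, rfl, h₁, rfl⟩ := rename_eq_app hx
    obtain ⟨t₀, rfl, rfl⟩ := rename_eq_lam h₁
    exact ⟨_, .beta, rfl⟩
  | @under t u s r _ ih =>
    obtain ⟨a₁, a₂, rfl, h₁, rfl⟩ := rename_eq_app hx
    obtain ⟨t₀, r₀, rfl, rfl, rfl⟩ := rename_eq_sub h₁
    obtain ⟨s₀, hs₀, rfl⟩ := ih (a := app t₀ (shift 0 a₂)) (ρ := upRen ρ)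
      (by simp [VTm.rename, rename_upRen_shift_zero])
    exact ⟨sub s₀ r₀, .under hs₀, rfl⟩

theorem RootEAbs.of_rename {ρ : ℕ → ℕ} {a b : VTm} (h : RootEAbs (a.rename ρ) b) :
    ∃ b₀, RootEAbs a b₀ ∧ b = b₀.rename ρ := by
  generalize hx : a.rename ρ = x at h
  induction h generalizing ρ a with
  | beta =>
    obtain ⟨a₁, a₂, rfl, rfl, h₂⟩ := rename_eq_sub hx
    obtain ⟨v, rfl, rfl⟩ := rename_eq_lam h₂
    exact ⟨_, .beta, by rw [rename_subst_zero]; rfl⟩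
  | under _ ih =>
    obtain ⟨a₁, a₂, rfl, rfl, h₂⟩ := rename_eq_sub hx
    obtain ⟨b₀, r₀, rfl, rfl, rfl⟩ := rename_eq_sub h₂
    obtain ⟨s₀, hs₀, rfl⟩ := ih (a := sub (shift 1 a₁) b₀) (ρ := upRen ρ)
      (by simp [VTm.rename, rename_upRen_upRen_shift_one])
    exact ⟨sub s₀ r₀, .under hs₀, rfl⟩

theorem Clo.of_rename {R : VTm → VTm → Prop}
    (hR : ∀ {ρ a b}, R (VTm.rename ρ a) b → ∃ b₀, R a b₀ ∧ b = b₀.rename ρ)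
    {ρ : ℕ → ℕ} {a b : VTm} (h : Clo R (a.rename ρ) b) :
    ∃ b₀, Clo R a b₀ ∧ b = b₀.rename ρ := by
  generalize hx : a.rename ρ = x at h
  induction h generalizing ρ a with
  | root h =>
    subst hx
    obtain ⟨b₀, hb, rfl⟩ := hR h
    exact ⟨b₀, .root hb, rfl⟩
  | appL _ ih =>
    obtain ⟨a₁, a₂, rfl, h₁, rfl⟩ := rename_eq_app hx
    obtain ⟨b₀, hb, rfl⟩ := ih h₁
    exact ⟨app b₀ a₂, .appL hb, rfl⟩
  | appR _ ih =>
    obtain ⟨a₁, a₂, rfl, rfl, h₂⟩ := rename_eq_app hx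
    obtain ⟨b₀, hb, rfl⟩ := ih h₂
    exact ⟨app a₁ b₀, .appR hb, rfl⟩
  | subL _ ih =>
    obtain ⟨a₁, a₂, rfl, h₁, rfl⟩ := rename_eq_sub hx
    obtain ⟨b₀, hb, rfl⟩ := ih h₁
    exact ⟨sub b₀ a₂, .subL hb, rfl⟩
  | subR _ ih =>
    obtain ⟨a₁, a₂, rfl, rfl, h₂⟩ := rename_eq_sub hx
    obtain ⟨b₀, hb, rfl⟩ := ih h₂
    exact ⟨sub a₁ b₀, .subR hb, rfl⟩

theorem Clo.of_shift {R : VTm → VTm → Prop}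
    (hR : ∀ {ρ a b}, R (VTm.rename ρ a) b → ∃ b₀, R a b₀ ∧ b = b₀.rename ρ)
    {k : ℕ} {a b : VTm} (h : Clo R (VTm.shift k a) b) : ∃ b₀, Clo R a b₀ ∧ b = VTm.shift k b₀ := by
  simp only [shift_eq_rename] at h ⊢
  exact Clo.of_rename hR h

theorem RootEVar.beta_rename (t : VTm) (n : ℕ) :
    RootEVar (sub t (var n)) (t.rename (substVarRen 0 n)) := by
  simpa only [subst_var_eq_rename] using RootEVar.beta (t := t) (n := n)

theorem rename_substVarRen_shift_zero (n : ℕ) (t : VTm) :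
    (shift 0 t).rename (substVarRen 0 n) = t := by
  rw [shift_eq_rename, rename_rename]
  conv_rhs => rw [← rename_id t]
  exact rename_congr (fun m => by simp [substVarRen, shiftRen]) t

theorem shift_zero_shift_zero (t : VTm) : shift 0 (shift 0 t) = (shift 0 t).rename (shiftRen 1) := by
  simp only [shift_eq_rename, rename_rename]
  exact rename_congr (fun m => by simp [shiftRen]) t

theorem swap_varBeta {R : VTm → VTm → Prop}
    (hR : ∀ {ρ a b}, R (VTm.rename ρ a) b → ∃ b₀, R a b₀ ∧ b = b₀.rename ρ)
    {a u : VTm} {n : ℕ} (h : Clo R (subst a 0 (var n)) u) :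
    ∃ r, Clo R (sub a (var n)) r ∧ RootEVar r u := by
  rw [subst_var_eq_rename] at h
  obtain ⟨a', ha', rfl⟩ := Clo.of_rename hR h
  exact ⟨sub a' (var n), .subL ha', .beta_rename a' n⟩

theorem swap_rootEVar_rootM_app {X p W q : VTm} (hX : RootEVar X p) (hp : RootM (app p W) q) :
    ∃ r, RootM (app X W) r ∧ RootEVar r q := by
  induction hX generalizing W q with
  | @beta a n =>
    rw [subst_var_eq_rename, ← rename_substVarRen_shift_zero n W] at hp
    obtain ⟨q₀, hq₀, rfl⟩ := RootM.of_rename (a := app a (shift 0 W)) hp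
    exact ⟨sub q₀ (var n), .under hq₀, .beta_rename q₀ n⟩
  | @under a b _ r _ ih =>
    cases hp with
    | under hp =>
      obtain ⟨Z, hZ, hZq⟩ := ih hp
      cases hZ with
      | under hZ =>
        rw [shift_zero_shift_zero, shift_eq_rename] at hZ
        obtain ⟨Z₀, hZ₀, rfl⟩ := RootM.of_rename (a := app a (shift 0 W)) hZ
        refine ⟨sub Z₀ (sub b r), .under hZ₀, .under ?_⟩
        rwa [shift_eq_rename]

theorem swap_cloEVar_fun_rootM {X p W q : VTm} (hX : Clo RootEVar X p) (hp : RootM (app p W) q) :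
    ∃ r, RootM (app X W) r ∧ Clo RootEVar r q := by
  generalize hx : app p W = x at hp
  induction hp generalizing p W X with
  | beta =>
    cases hx
    cases hX with
    | root hX =>
      obtain ⟨r, h₁, h₂⟩ := swap_rootEVar_rootM_app hX .beta
      exact ⟨r, h₁, .root h₂⟩
  | under hm ih =>
    cases hx
    cases hX with
    | root hX =>
      obtain ⟨r, h₁, h₂⟩ := swap_rootEVar_rootM_app hX (.under hm)
      exact ⟨r, h₁, .root h₂⟩
    | subL hX =>
      obtain ⟨r, h₁, h₂⟩ := ih hX rfl
      exact ⟨_, .under h₁, .subL h₂⟩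
    | subR hX => exact ⟨_, .under hm, .subR hX⟩

theorem swap_cloEVar_arg_rootM {p W W' q : VTm} (hW : Clo RootEVar W' W) (hp : RootM (app p W) q) :
    ∃ r, RootM (app p W') r ∧ Clo RootEVar r q := by
  generalize hx : app p W = x at hp
  induction hp generalizing p W W' with
  | beta => cases hx; exact ⟨_, .beta, .subR hW⟩
  | under _ ih =>
    cases hx
    obtain ⟨r, h₁, h₂⟩ := ih (hW.shift RootEVar.rename 0) rfl
    exact ⟨_, .under h₁, .subL h₂⟩

theorem swap_rootEVar_cloM {t s u : VTm} (hE : RootEVar t s) (hM : Clo RootM s u) :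
    ∃ r, Clo RootM t r ∧ RootEVar r u := by
  induction hE generalizing u with
  | beta => exact swap_varBeta RootM.of_rename hM
  | under hE ih =>
    cases hM with
    | root hM => cases hM
    | subL hM =>
      obtain ⟨r₁, h₁, h₂⟩ := ih hM
      cases h₁ with
      | root h₁ => cases h₁
      | subL h₁ =>
        obtain ⟨a₀, ha₀, rfl⟩ := Clo.of_shift RootM.of_rename h₁
        exact ⟨_, .subL ha₀, .under h₂⟩
      | subR h₁ => exact ⟨_, .subR (.subL h₁), .under h₂⟩
    | subR hM => exact ⟨_, .subR (.subR hM), .under hE⟩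

theorem swap_stepEVar_stepM {t s u : VTm} (hE : Clo RootEVar t s) (hM : Clo RootM s u) :
    ∃ r, Clo RootM t r ∧ Clo RootEVar r u := by
  induction hE generalizing u with
  | root hE =>
    obtain ⟨r, h₁, h₂⟩ := swap_rootEVar_cloM hE hM
    exact ⟨r, h₁, .root h₂⟩
  | appL hE ih =>
    cases hM with
    | root hM =>
      obtain ⟨r, h₁, h₂⟩ := swap_cloEVar_fun_rootM hE hM
      exact ⟨r, .root h₁, h₂⟩
    | appL hM =>
      obtain ⟨r, h₁, h₂⟩ := ih hM
      exact ⟨_, .appL h₁, .appL h₂⟩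
    | appR hM => exact ⟨_, .appR hM, .appL hE⟩
  | appR hE ih =>
    cases hM with
    | root hM =>
      obtain ⟨r, h₁, h₂⟩ := swap_cloEVar_arg_rootM hE hM
      exact ⟨r, .root h₁, h₂⟩
    | appL hM => exact ⟨_, .appL hM, .appR hE⟩
    | appR hM =>
      obtain ⟨r, h₁, h₂⟩ := ih hM
      exact ⟨_, .appR h₁, .appR h₂⟩
  | subL hE ih =>
    cases hM with
    | root hM => cases hM
    | subL hM =>
      obtain ⟨r, h₁, h₂⟩ := ih hM
      exact ⟨_, .subL h₁, .subL h₂⟩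
    | subR hM => exact ⟨_, .subR hM, .subL hE⟩
  | subR hE ih =>
    cases hM with
    | root hM => cases hM
    | subL hM => exact ⟨_, .subL hM, .subR hE⟩
    | subR hM =>
      obtain ⟨r, h₁, h₂⟩ := ih hM
      exact ⟨_, .subR h₁, .subR h₂⟩

def RootE (t u : VTm) : Prop := RootEAbs t u ∨ RootEVar t u

theorem RootE.under {t b r s : VTm} (h : RootE (sub (shift 1 t) b) s) :
    RootE (sub t (sub b r)) (sub s r) :=
  h.imp .under .under

theorem RootE.stepE {t u : VTm} (h : RootE t u) : StepE t u :=
  h.imp .root .root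

theorem StepE.appL {t t' u : VTm} (h : StepE t t') : StepE (app t u) (app t' u) :=
  h.imp .appL .appL

theorem StepE.appR {t u u' : VTm} (h : StepE u u') : StepE (app t u) (app t u') :=
  h.imp .appR .appR

theorem StepE.subL {t t' u : VTm} (h : StepE t t') : StepE (sub t u) (sub t' u) :=
  h.imp .subL .subL

theorem StepE.subR {t u u' : VTm} (h : StepE u u') : StepE (sub t u) (sub t u') :=
  h.imp .subR .subR

theorem RootEVar.subst_lam {x y : VTm} (h : RootEVar x y) (k : ℕ) (v : VTm) :
    RootE (subst x k (lam v)) (subst y k (lam v)) := by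
  induction h generalizing k v with
  | beta =>
    rw [subst_subst_zero]
    simp only [subst]
    split_ifs
    · exact .inl .beta
    all_goals exact .inr .beta
  | under _ ih =>
    have := ih (k + 1) (shift 1 v)
    simp only [subst] at this ⊢
    rw [show lam (shift 1 v) = shift 0 (lam v) from rfl, subst_shift_one] at this
    exact this.under

theorem Clo.rootEVar_subst_lam {x y : VTm} (h : Clo RootEVar x y) (k : ℕ) (v : VTm) :
    StepE (subst x k (lam v)) (subst y k (lam v)) := by
  induction h generalizing k v with
  | root h => exact (h.subst_lam k v).stepE
  | appL _ ih => exact (ih k v).appL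
  | appR _ ih => exact (ih k v).appR
  | subL _ ih => exact (ih (k + 1) (VTm.shift 1 v)).subL
  | subR _ ih => exact (ih k v).subR

/-- The argument of an `evar` redex is of the form `L⟨x⟩`, never `L⟨λy.u⟩`. -/
theorem RootEVar.not_rootEAbs {t t' b s s' : VTm} (h : RootEVar (sub t b) s) :
    ¬ RootEAbs (sub t' b) s' := by
  generalize hx : sub t b = x at h
  induction h generalizing t t' b s' with
  | beta => cases hx; nofun
  | under _ ih =>
    cases hx
    rintro (_ | h')
    exact ih rfl h'

theorem swap_cloEVar_body_rootEAbs {T T' c q : VTm} (hT : Clo RootEVar T' T)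
    (h : RootEAbs (sub T c) q) : ∃ r, RootEAbs (sub T' c) r ∧ StepE r q := by
  generalize hx : sub T c = x at h
  induction h generalizing T T' c with
  | beta => cases hx; exact ⟨_, .beta, hT.rootEVar_subst_lam 0 _⟩
  | under _ ih =>
    cases hx
    obtain ⟨r, h₁, h₂⟩ := ih (hT.shift RootEVar.rename 1) rfl
    exact ⟨_, .under h₁, h₂.subL⟩

theorem swap_rootEVar_arg_rootEAbs {c b p s q : VTm} (hE : RootEVar (sub (shift 1 c) b) s)
    (hA : RootEAbs (sub (shift 1 p) s) q) :
    ∃ r, RootEAbs (sub (shift 1 p) c) r ∧ RootEVar (sub (shift 1 r) b) q := by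
  generalize hx : sub (shift 1 c) b = x at hE
  induction hE generalizing c b p q with
  | @beta _ n =>
    cases hx
    rw [subst_shift_one_var, ← rename_upRen_update_shift_one n p] at hA
    obtain ⟨r, hr, rfl⟩ := RootEAbs.of_rename (a := sub (shift 1 p) c) hA
    refine ⟨r, hr, ?_⟩
    simpa only [subst_shift_one_var] using RootEVar.beta (t := shift 1 r) (n := n)
  | under _ ih =>
    cases hx
    cases hA with
    | under hA =>
      obtain ⟨r₁, h₁, h₂⟩ := ih hA rfl
      rw [← shift_one_sub_shift_one, shift_eq_rename] at h₁
      obtain ⟨r, hr, rfl⟩ := RootEAbs.of_rename h₁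
      rw [← shift_eq_rename] at h₂
      exact ⟨r, hr, .under h₂⟩

theorem swap_varBeta_arg_rootEAbs {T Y q : VTm} {n : ℕ} (h : RootEAbs (sub T (subst Y 0 (var n))) q) :
    ∃ r, RootEAbs (sub T (sub Y (var n))) r ∧ RootEVar r q := by
  rw [subst_var_eq_rename, ← rename_upRen_substVarRen_shift_one n T] at h
  obtain ⟨r, hr, rfl⟩ := RootEAbs.of_rename (a := sub (shift 1 T) Y) h
  exact ⟨sub r (var n), .under hr, .beta_rename r n⟩

theorem swap_cloEVar_arg_rootEAbs {T X b q : VTm} (hX : Clo RootEVar X b)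
    (h : RootEAbs (sub T b) q) : ∃ r, RootEAbs (sub T X) r ∧ StepE r q := by
  induction hX generalizing T q with
  | root hX =>
    cases hX with
    | beta =>
      obtain ⟨r, h₁, h₂⟩ := swap_varBeta_arg_rootEAbs h
      exact ⟨r, h₁, .inr (.root h₂)⟩
    | under hX =>
      cases h with
      | under h =>
        obtain ⟨r, h₁, h₂⟩ := swap_rootEVar_arg_rootEAbs hX h
        exact ⟨_, .under h₁, .inr (.root (.under h₂))⟩
  | appL => cases h
  | appR => cases h
  | subL _ ih =>
    cases h with
    | under h =>
      obtain ⟨r, h₁, h₂⟩ := ih h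
      exact ⟨_, .under h₁, h₂.subL⟩
  | subR hX => cases h with
    | under h => exact ⟨_, .under h, .inr (.subR hX)⟩

theorem RootEVar.shift_one_sub {a b s : VTm} (h : RootEVar (sub (shift 1 a) b) s) :
    RootEVar (sub (shift 1 (shift 1 a)) (shift 1 b)) (shift 1 s) := by
  simpa only [← shift_one_sub_shift_one, ← shift_eq_rename] using h.rename (shiftRen 1)

theorem swap_rootEVar_rootEAbs_arg {a b c s q : VTm} (hE : RootEVar (sub (shift 1 a) b) s)
    (hA : RootEAbs (sub (shift 1 s) c) q) :
    ∃ r, RootEAbs (sub (shift 1 b) c) r ∧ RootE (sub (shift 1 a) r) q := by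
  generalize hx : sub (shift 1 s) c = x at hA
  induction hA generalizing a b c s with
  | @beta _ v =>
    cases hx
    have := hE.shift_one_sub.subst_lam 0 v
    simp only [subst, Nat.zero_add, subst_shift_one_one] at this
    exact ⟨_, .beta, this⟩
  | under _ ih =>
    cases hx
    obtain ⟨r, h₁, h₂⟩ := ih hE.shift_one_sub rfl
    exact ⟨_, .under h₁, h₂.under⟩

theorem swap_rootEVar_cloEAbs {t s u : VTm} (hE : RootEVar t s) (hA : Clo RootEAbs s u) :
    ∃ r, Clo RootEAbs t r ∧ RootE r u := by
  induction hE generalizing u with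
  | beta =>
    obtain ⟨r, h₁, h₂⟩ := swap_varBeta RootEAbs.of_rename hA
    exact ⟨r, h₁, .inr h₂⟩
  | under hE ih =>
    cases hA with
    | root hA =>
      cases hA with
      | @beta _ v =>
        have := hE.subst_lam 0 v
        simp only [subst, Nat.zero_add, subst_shift_one_one] at this
        exact ⟨_, .subR (.root .beta), this⟩
      | under hA =>
        obtain ⟨r, h₁, h₂⟩ := swap_rootEVar_rootEAbs_arg hE hA
        exact ⟨_, .subR (.root (.under h₁)), h₂.under⟩
    | subL hA =>
      obtain ⟨r₁, h₁, h₂⟩ := ih hA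
      cases h₁ with
      | root h₁ => exact absurd h₁ hE.not_rootEAbs
      | subL h₁ =>
        obtain ⟨a₀, ha₀, rfl⟩ := Clo.of_shift RootEAbs.of_rename h₁
        exact ⟨_, .subL ha₀, h₂.under⟩
      | subR h₁ => exact ⟨_, .subR (.subL h₁), h₂.under⟩
    | subR hA => exact ⟨_, .subR (.subR hA), .inr (.under hE)⟩

theorem swap_stepEVar_stepEAbs {t s u : VTm} (hE : Clo RootEVar t s) (hA : Clo RootEAbs s u) :
    ∃ r, Clo RootEAbs t r ∧ StepE r u := by
  induction hE generalizing u with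
  | root hE =>
    obtain ⟨r, h₁, h₂⟩ := swap_rootEVar_cloEAbs hE hA
    exact ⟨r, h₁, h₂.stepE⟩
  | appL hE ih =>
    cases hA with
    | root hA => cases hA
    | appL hA =>
      obtain ⟨r, h₁, h₂⟩ := ih hA
      exact ⟨_, .appL h₁, h₂.appL⟩
    | appR hA => exact ⟨_, .appR hA, .inr (.appL hE)⟩
  | appR hE ih =>
    cases hA with
    | root hA => cases hA
    | appL hA => exact ⟨_, .appL hA, .inr (.appR hE)⟩
    | appR hA =>
      obtain ⟨r, h₁, h₂⟩ := ih hA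
      exact ⟨_, .appR h₁, h₂.appR⟩
  | subL hE ih =>
    cases hA with
    | root hA =>
      obtain ⟨r, h₁, h₂⟩ := swap_cloEVar_body_rootEAbs hE hA
      exact ⟨r, .root h₁, h₂⟩
    | subL hA =>
      obtain ⟨r, h₁, h₂⟩ := ih hA
      exact ⟨_, .subL h₁, h₂.subL⟩
    | subR hA => exact ⟨_, .subR hA, .inr (.subL hE)⟩
  | subR hE ih =>
    cases hA with
    | root hA =>
      obtain ⟨r, h₁, h₂⟩ := swap_cloEVar_arg_rootEAbs hE hA
      exact ⟨r, .root h₁, h₂⟩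
    | subL hA => exact ⟨_, .subL hA, .inr (.subR hE)⟩
    | subR hA =>
      obtain ⟨r, h₁, h₂⟩ := ih hA
      exact ⟨_, .subR h₁, h₂.subR⟩

end VTm

/-- linear postponement of variable-exponential steps. -/
theorem evar_linear_postponement :
    (∀ t s u : VTm, StepEVar t s → StepM s u →
      ∃ r, StepM t r ∧ StepEVar r u) ∧
    (∀ t s u : VTm, StepEVar t s → StepEAbs s u →
      ∃ r, StepEAbs t r ∧ StepE r u) :=
  ⟨fun _ _ _ => swap_stepEVar_stepM, fun _ _ _ => swap_stepEVar_stepEAbs⟩
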